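/- arXiv:1611.01621 — 2 statements merged into one kernel-verified Lean document; each statement's English description precedes it below -/
import Mathlib

section
/- (Galois descent) Let E/F be a finite Galois extension with group G, and let W be a finite-dimensional E-vector space with a semilinear G-action, i.e., an F-linear action π of G on W with π(g)(e·w) = g(e)·π(g)(w) for g ∈ G, e ∈ E, w ∈ W. Then the F-subspace W₀ = W^G of G-fixed vectors satisfies W₀ ⊗_F E ≅ W via the multiplication map w₀ ⊗ e ↦ e·w₀. -/
/-!
The trace `w ↦ ∑ g, π g w` maps `W` into the fixed vectors and sends `c • v` to `Tr(c) • v`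
when `v` is fixed. A linear form on `W` vanishing on the fixed vectors therefore kills
`∑ g, g e • π g w` for every `e`, and Dedekind's independence of the automorphisms forces it to
kill `w`: the fixed vectors span `W` over `E`. Conversely, an `E`-linear relation
`∑ c_j • v_j = 0` among fixed vectors yields the `F`-linear relations `∑ Tr(x c_j) • v_j = 0`,
so nondegeneracy of the trace form shows that an `F`-basis of the fixed vectors stays
`E`-linearly independent, hence is an `E`-basis of `W`.
-/

def galoisFixed {F E W : Type*} [Field F] [Field E] [Algebra F E]
    [AddCommGroup W] [Module F W]
    (π : (E ≃ₐ[F] E) →* (W →ₗ[F] W)) : Submodule F W where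
  carrier := {w | ∀ g, π g w = w}
  add_mem' := by
    intro a b ha hb g
    rw [map_add, ha g, hb g]
  zero_mem' := fun g => map_zero _
  smul_mem' := by
    intro c w hw g
    rw [map_smul, hw g]

theorem IsBaseChange.of_basis_map {R S V W ι : Type*} [CommSemiring R] [CommSemiring S]
    [Algebra R S] [AddCommMonoid V] [Module R V] [AddCommMonoid W] [Module R W] [Module S W]
    [IsScalarTower R S W] {f : V →ₗ[R] W} (b : Module.Basis ι R V) (c : Module.Basis ι S W)
    (h : ∀ i, f (b i) = c i) : IsBaseChange S f := by
  have hf : f = (Finsupp.linearCombination R c).comp b.repr.toLinearMap :=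
    b.ext fun i => by simp [h]
  exact hf ▸ (IsBaseChange.of_basis R c).comp_equiv b.repr _

theorem Module.Basis.span_range_coe {R S M ι : Type*} [CommSemiring R] [Semiring S]
    [Algebra R S] [AddCommMonoid M] [Module R M] [Module S M] [IsScalarTower R S M]
    {p : Submodule R M} (b : Module.Basis ι R p) :
    Submodule.span S (Set.range fun i => (b i : M)) = Submodule.span S (p : Set M) := by
  have hR : Submodule.span R (Set.range fun i => (b i : M)) = p := by
    rw [show (fun i => (b i : M)) = p.subtype ∘ b from rfl, Set.range_comp,
      Submodule.span_image, b.span_eq, Submodule.map_subtype_top]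
  rw [← Submodule.span_span_of_tower R S, hR]

theorem AlgEquiv.linearIndependent_coeFn (R A : Type*) [CommSemiring R] [CommRing A] [IsDomain A]
    [Algebra R A] : LinearIndependent A (fun g : A ≃ₐ[R] A => (g : A → A)) :=
  (linearIndependent_monoidHom A A).comp (fun g : A ≃ₐ[R] A => (g : A →* A))
    fun _ _ h => AlgEquiv.ext fun x => DFunLike.congr_fun h x

section SemilinearAction

variable {F E W : Type*} [Field F] [Field E] [Algebra F E] [FiniteDimensional F E]
  [AddCommGroup W] [Module F W]

noncomputable def galoisTrace (π : (E ≃ₐ[F] E) →* (W →ₗ[F] W)) : W →ₗ[F] W := ∑ g, π g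

theorem galoisTrace_apply (π : (E ≃ₐ[F] E) →* (W →ₗ[F] W)) (w : W) :
    galoisTrace π w = ∑ g, π g w :=
  LinearMap.sum_apply _ _ _

theorem galoisTrace_mem_galoisFixed (π : (E ≃ₐ[F] E) →* (W →ₗ[F] W)) (w : W) :
    galoisTrace π w ∈ galoisFixed π := by
  intro h
  rw [galoisTrace_apply, map_sum]
  exact Fintype.sum_equiv (Equiv.mulLeft h) _ _ fun g => by
    rw [← Module.End.mul_apply, ← map_mul]; rfl

variable [Module E W] {π : (E ≃ₐ[F] E) →* (W →ₗ[F] W)}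
  (hsemi : ∀ (g : E ≃ₐ[F] E) (e : E) (w : W), π g (e • w) = g e • π g w)
include hsemi

theorem span_galoisFixed_eq_top : Submodule.span E (galoisFixed π : Set W) = ⊤ := by
  refine Submodule.eq_top_iff'.2 fun w => by_contra fun hw => ?_
  obtain ⟨φ, hφw, hφ⟩ := Submodule.exists_dual_map_eq_bot_of_notMem hw inferInstance
  have hvanish (v : W) (hv : v ∈ galoisFixed π) : φ v = 0 :=
    (Submodule.mem_bot E).1 (hφ ▸ Submodule.mem_map_of_mem (Submodule.subset_span hv))
  have hsum : ∑ g : E ≃ₐ[F] E, φ (π g w) • (g : E → E) = 0 := funext fun e => by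
    calc (∑ g : E ≃ₐ[F] E, φ (π g w) • (g : E → E)) e = φ (galoisTrace π (e • w)) := by
          simp [galoisTrace_apply, hsemi, mul_comm]
      _ = 0 := hvanish _ (galoisTrace_mem_galoisFixed π _)
  have h1 := Fintype.linearIndependent_iff.1 (AlgEquiv.linearIndependent_coeFn F E) _ hsum 1
  exact hφw (by simpa using h1)

variable [IsScalarTower F E W]

theorem galoisTrace_smul_of_mem_galoisFixed [IsGalois F E] {v : W} (hv : v ∈ galoisFixed π)
    (c : E) : galoisTrace π (c • v) = Algebra.trace F E c • v := by
  rw [galoisTrace_apply, ← algebraMap_smul E (Algebra.trace F E c) v,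
    trace_eq_sum_automorphisms, Finset.sum_smul]
  simp only [hsemi, hv _]

theorem LinearIndependent.of_mem_galoisFixed [IsGalois F E] {ι : Type*} {v : ι → W}
    (hmem : ∀ i, v i ∈ galoisFixed π) (hv : LinearIndependent F v) : LinearIndependent E v := by
  rw [linearIndependent_iff'] at hv ⊢
  intro s c hsum i hi
  have htrace (x : E) : ∑ j ∈ s, Algebra.trace F E (x * c j) • v j = 0 := by
    calc ∑ j ∈ s, Algebra.trace F E (x * c j) • v j
        = galoisTrace π (x • ∑ j ∈ s, c j • v j) := by
          simp only [Finset.smul_sum, smul_smul, map_sum,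
            galoisTrace_smul_of_mem_galoisFixed hsemi (hmem _)]
      _ = 0 := by rw [hsum, smul_zero, map_zero]
  refine (traceForm_nondegenerate F E).1 (c i) fun x => ?_
  rw [Algebra.traceForm_apply, mul_comm]
  exact hv s _ (htrace x) i hi

end SemilinearAction

theorem stmt8_general {F E W : Type*} [Field F] [Field E] [Algebra F E]
    [FiniteDimensional F E] [IsGalois F E]
    [AddCommGroup W] [Module F W] [Module E W] [IsScalarTower F E W]
    (π : (E ≃ₐ[F] E) →* (W →ₗ[F] W))
    (hsemi : ∀ (g : E ≃ₐ[F] E) (e : E) (w : W), π g (e • w) = g e • π g w) :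
    IsBaseChange E (galoisFixed π).subtype := by
  let B := Module.Free.chooseBasis F (galoisFixed π)
  have hli : LinearIndependent E fun i => (B i : W) :=
    .of_mem_galoisFixed hsemi (fun i => (B i).2)
      (B.linearIndependent.map' _ (Submodule.ker_subtype _))
  have hspan : ⊤ ≤ Submodule.span E (Set.range fun i => (B i : W)) := by
    rw [B.span_range_coe, span_galoisFixed_eq_top hsemi]
  exact .of_basis_map B (.mk hli hspan) fun i => (Module.Basis.mk_apply hli hspan i).symm

/-- Galois descent: Let `E/F` be a finite Galois extension with group
`G = Gal(E/F)`, and `W` a finite-dimensional `E`-vector space with a semilinear `G`-action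
`π`, i.e. `π(g)(e • w) = g(e) • π(g)(w)`.  Then the `F`-subspace `W₀ = W^G` of fixed
vectors satisfies `W₀ ⊗_F E ≅ W` via the multiplication map `w₀ ⊗ e ↦ e • w₀`. -/
theorem stmt8 {F E W : Type*} [Field F] [Field E] [Algebra F E]
    [FiniteDimensional F E] [IsGalois F E]
    [AddCommGroup W] [Module F W] [Module E W] [IsScalarTower F E W]
    [FiniteDimensional E W]
    (π : (E ≃ₐ[F] E) →* (W →ₗ[F] W))
    (hsemi : ∀ (g : E ≃ₐ[F] E) (e : E) (w : W), π g (e • w) = g e • π g w) :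
    IsBaseChange E (galoisFixed π).subtype :=
  stmt8_general π hsemi
end

section
/- Let N be a locally compact totally disconnected abelian group acting smoothly on the Schwartz space S(X) of a locally compact totally disconnected space X by (n·f)(x) = ψ_x(n) f(x), where x ↦ ψ_x is a continuous map from X to the character group of N. If ψ is a character of N that is not equal to ψ_x for any x ∈ X, then the twisted Jacquet module S(X)_ψ = S(X)/span{n·f − ψ(n) f : n ∈ N, f ∈ S(X)} is zero. (Key algebraic step: for X' compact open, the ideal of S(X') generated by the functions x ↦ (1 − ψ_x(n)⁻¹ψ(n)) f(x) is all of S(X') unless some ψ_{x₀} = ψ.) -/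
/-!
The span `W` of the twisted differences `n • f - ψ n • f` is stable under multiplication by
locally constant functions, because `N` acts by multiplication operators. Given `x`, choose `n`
with `Ψ x n ≠ ψ n` and `f ∈ S(X)` with `f x = 1`: the generator `g = n • f - ψ n • f ∈ W` is
locally constant, so it equals the nonzero constant `c = Ψ x n - ψ n` on a clopen neighbourhood
`V` of `x`, and every Schwartz function `h` supported in `V` is `(c⁻¹ h) * g ∈ W`. Covering the
compact support of an arbitrary Schwartz function by finitely many such `V` and cutting it up
with characteristic functions shows `W = S(X)`.
-/

/-- The Schwartz space `S(X)` of a totally disconnected space: locally constant,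
compactly supported `ℂ`-valued functions, as a submodule of `LocallyConstant X ℂ`. -/
noncomputable def SchwartzTD (X : Type*) [TopologicalSpace X] : Submodule ℂ (LocallyConstant X ℂ) where
  carrier := {f | HasCompactSupport (f : X → ℂ)}
  add_mem' := by
    intro f g hf hg
    simpa using hf.add hg
  zero_mem' := by
    simp [HasCompactSupport, tsupport] 
  smul_mem' := by
    intro c f hf
    first
      | exact hf.smul_left (f := fun _ => c)
      | simpa [Pi.smul_def] using hf.smul_left (f := fun _ => c)


namespace SchwartzTD

variable {X : Type*} [TopologicalSpace X]

@[ext]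
lemma ext {f g : SchwartzTD X}
    (h : ∀ x, (f : LocallyConstant X ℂ) x = (g : LocallyConstant X ℂ) x) : f = g :=
  Subtype.ext (LocallyConstant.ext h)

lemma coe_sub_apply (f g : SchwartzTD X) (x : X) :
    ((f - g : SchwartzTD X) : LocallyConstant X ℂ) x =
      (f : LocallyConstant X ℂ) x - (g : LocallyConstant X ℂ) x :=
  rfl

lemma coe_smul_apply (c : ℂ) (f : SchwartzTD X) (x : X) :
    ((c • f : SchwartzTD X) : LocallyConstant X ℂ) x = c * (f : LocallyConstant X ℂ) x :=
  rfl

noncomputable def mulLeft (h : LocallyConstant X ℂ) : SchwartzTD X →ₗ[ℂ] SchwartzTD X :=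
  (LinearMap.mulLeft ℂ h).restrict fun _ (hf : HasCompactSupport _) => hf.mul_left

@[simp]
lemma mulLeft_apply (h : LocallyConstant X ℂ) (f : SchwartzTD X) (x : X) :
    (mulLeft h f : LocallyConstant X ℂ) x = h x * (f : LocallyConstant X ℂ) x :=
  rfl

lemma mulLeft_comm_of_apply_eq_mul {T : Module.End ℂ (SchwartzTD X)} {a : X → ℂ}
    (hT : ∀ f x, (T f : LocallyConstant X ℂ) x = a x * (f : LocallyConstant X ℂ) x)
    (h : LocallyConstant X ℂ) (f : SchwartzTD X) : mulLeft h (T f) = T (mulLeft h f) := by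
  ext x
  simp only [mulLeft_apply, hT]
  ring

def ContainsSupportedIn (W : Submodule ℂ (SchwartzTD X)) (U : Set X) : Prop :=
  ∀ g : SchwartzTD X, (∀ x ∉ U, (g : LocallyConstant X ℂ) x = 0) → g ∈ W

variable {W : Submodule ℂ (SchwartzTD X)}

lemma containsSupportedIn_empty : ContainsSupportedIn W ∅ := by
  intro g hg
  convert W.zero_mem
  ext x
  simpa using hg x (Set.notMem_empty x)

lemma ContainsSupportedIn.union {U V : Set X} (hU : ContainsSupportedIn W U) (hUc : IsClopen U)
    (hV : ContainsSupportedIn W V) : ContainsSupportedIn W (U ∪ V) := by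
  intro g hg
  have hgU : mulLeft (LocallyConstant.charFn ℂ hUc) g ∈ W := hU _ fun x hx => by
    simp [LocallyConstant.coe_charFn, hx]
  have hgV : g - mulLeft (LocallyConstant.charFn ℂ hUc) g ∈ W := hV _ fun x hx => by
    rw [coe_sub_apply, mulLeft_apply]
    by_cases hxU : x ∈ U
    · simp [LocallyConstant.coe_charFn, hxU]
    · simp [hg x (by simp [hxU, hx])]
  simpa using W.add_mem hgU hgV

lemma containsSupportedIn_biUnion {ι : Type*} (s : Finset ι) {U : ι → Set X}
    (hUc : ∀ i, IsClopen (U i)) (hU : ∀ i, ContainsSupportedIn W (U i)) :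
    ContainsSupportedIn W (⋃ i ∈ s, U i) := by
  classical
  induction s using Finset.induction_on with
  | empty => simpa using containsSupportedIn_empty
  | insert i s _ ih =>
    simpa only [Finset.set_biUnion_insert] using (hU i).union (hUc i) ih

lemma eq_top_of_forall_containsSupportedIn_nhds
    (hloc : ∀ x, ∃ U, IsClopen U ∧ x ∈ U ∧ ContainsSupportedIn W U) : W = ⊤ := by
  choose U hUc hxU hU using hloc
  refine eq_top_iff.2 fun f _ => ?_
  have hf : HasCompactSupport (f : X → ℂ) := f.2
  obtain ⟨s, hs⟩ := hf.elim_finite_subcover U (fun x => (hUc x).isOpen)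
    fun x _ => Set.mem_iUnion.2 ⟨x, hxU x⟩
  exact containsSupportedIn_biUnion s hUc hU f fun x hx =>
    image_eq_zero_of_notMem_tsupport fun hx' => hx (hs hx')

lemma containsSupportedIn_fiber (hW : ∀ h, W ≤ W.comap (mulLeft h)) {g : SchwartzTD X}
    (hg : g ∈ W) {c : ℂ} (hc : c ≠ 0) :
    ContainsSupportedIn W {x | (g : LocallyConstant X ℂ) x = c} := by
  intro f hf
  suffices f = mulLeft (c⁻¹ • (f : LocallyConstant X ℂ)) g from this ▸ hW _ hg
  ext x
  by_cases hx : (g : LocallyConstant X ℂ) x = c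
  · rw [mulLeft_apply, hx, LocallyConstant.coe_smul, Pi.smul_apply, smul_eq_mul,
      mul_comm c⁻¹, inv_mul_cancel_right₀ hc]
  · simp [hf x hx]

lemma exists_apply_eq_one [T2Space X] [LocallyCompactSpace X] [TotallyDisconnectedSpace X]
    (x : X) : ∃ f : SchwartzTD X, (f : LocallyConstant X ℂ) x = 1 := by
  obtain ⟨K, hK, hxK⟩ := exists_compact_mem_nhds x
  obtain ⟨C, hC, hxC, hCK⟩ := loc_compact_Haus_tot_disc_of_zero_dim.mem_nhds_iff.1 hxK
  refine ⟨⟨LocallyConstant.charFn ℂ hC, ?_⟩, by simp [LocallyConstant.coe_charFn, hxC]⟩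
  exact HasCompactSupport.intro (hK.of_isClosed_subset hC.isClosed hCK) fun y hy => by
    simp [LocallyConstant.coe_charFn, hy]

end SchwartzTD

open SchwartzTD in
theorem stmt14_general {X : Type*} [TopologicalSpace X] [T2Space X] [LocallyCompactSpace X]
    [TotallyDisconnectedSpace X]
    {N : Type*} [CommGroup N]
    (Ψ : X → N → ℂ) (ψ : N → ℂ)
    (ρ : N →* Module.End ℂ (SchwartzTD X))
    (hρ : ∀ (n : N) (f : SchwartzTD X) (x : X),
      ((ρ n f : LocallyConstant X ℂ) : X → ℂ) x = Ψ x n * ((f : LocallyConstant X ℂ) : X → ℂ) x)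
    (hne : ∀ x : X, ∃ n : N, Ψ x n ≠ ψ n) :
    Submodule.span ℂ {g : SchwartzTD X | ∃ (n : N) (f : SchwartzTD X), g = ρ n f - ψ n • f}
      = ⊤ := by
  set W := Submodule.span ℂ {g : SchwartzTD X | ∃ (n : N) (f : SchwartzTD X), g = ρ n f - ψ n • f}
  have hW : ∀ h, W ≤ W.comap (mulLeft h) := fun h => Submodule.span_le.2 <| by
    rintro _ ⟨n, f, rfl⟩
    rw [SetLike.mem_coe, Submodule.mem_comap, map_sub, map_smul,
      mulLeft_comm_of_apply_eq_mul (hρ n)]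
    exact Submodule.subset_span ⟨n, _, rfl⟩
  refine eq_top_of_forall_containsSupportedIn_nhds fun x => ?_
  obtain ⟨n, hn⟩ := hne x
  obtain ⟨f, hf⟩ := exists_apply_eq_one x
  have hgx : ((ρ n f - ψ n • f : SchwartzTD X) : LocallyConstant X ℂ) x = Ψ x n - ψ n := by
    rw [coe_sub_apply, coe_smul_apply, hρ, hf, mul_one, mul_one]
  exact ⟨_, (LocallyConstant.isLocallyConstant _).isClopen_fiber _, hgx,
    containsSupportedIn_fiber hW (Submodule.subset_span ⟨n, f, rfl⟩) (sub_ne_zero.2 hn)⟩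

/-- Let `N` be a locally compact totally disconnected abelian group acting
smoothly on `S(X)` by `(n·f)(x) = ψ_x(n) f(x)`, where `x ↦ ψ_x` is a continuous family of
characters of `N`.  If `ψ` is a character of `N` with `ψ ≠ ψ_x` for every `x ∈ X`, then the
twisted Jacquet module `S(X)_ψ` is zero, i.e. the span of `{n·f − ψ(n)f}` is all of `S(X)`. -/
theorem stmt14 {X : Type*} [TopologicalSpace X] [T2Space X] [LocallyCompactSpace X]
    [TotallyDisconnectedSpace X]
    {N : Type*} [CommGroup N] [TopologicalSpace N] [IsTopologicalGroup N]
    [LocallyCompactSpace N] [TotallyDisconnectedSpace N]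
    (Ψ : X → N → ℂ) (ψ : N → ℂ)
    (hΨchar : ∀ x, ∀ n m, Ψ x (n * m) = Ψ x n * Ψ x m)
    (hΨcont : ∀ x, Continuous (Ψ x))
    (hcont : ∀ n, Continuous fun x => Ψ x n)
    (hψchar : ∀ n m, ψ (n * m) = ψ n * ψ m)
    (hψcont : Continuous ψ)
    (ρ : N →* Module.End ℂ (SchwartzTD X))
    (hρ : ∀ (n : N) (f : SchwartzTD X) (x : X),
      ((ρ n f : LocallyConstant X ℂ) : X → ℂ) x = Ψ x n * ((f : LocallyConstant X ℂ) : X → ℂ) x)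
    (hne : ∀ x : X, ∃ n : N, Ψ x n ≠ ψ n) :
    Submodule.span ℂ {g : SchwartzTD X | ∃ (n : N) (f : SchwartzTD X), g = ρ n f - ψ n • f}
      = ⊤ :=
  stmt14_general Ψ ψ ρ hρ hne
end
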